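/- arXiv:math/0507053 — 2 statements merged into one kernel-verified Lean document; each statement's English description precedes it below -/
import Mathlib

section
/- For every admissible graph Γ ∈ G_{n,3} (three boundary vertices), there exists a unique normal subgraph α_L(Γ) of Γ whose boundary vertices are exactly the first and second boundary vertices of Γ, such that the quotient Γ/α_L(Γ) is admissible with two boundary vertices. Symmetrically, there is a unique normal subgraph α_R(Γ) sitting on the second and third boundary vertices. -/
/-!
The normal subgraph sitting on all boundary vertices but `b` is forced to be the set of vertices
from which `b` cannot be reached. A normal subgraph `T` is closed under edges (its internal
vertices keep both of their edges), so it contains no ancestor of `b`. Conversely, a vertex outside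
`T` that is internal in `Γ/T` needs an edge leaving `T`, because all its edges into `T` merge into
the single edge to the collapsed vertex; well-founded induction along the acyclic edge relation
then puts every non-ancestor of `b` into `T`. The same two observations show that the
non-ancestors of `b` do form a normal subgraph.
-/

/-- An admissible graph: finite directed acyclic graph, boundary vertices are sinks,
internal vertices have exactly two outgoing edges. -/
def IsAdm {V : Type} [Fintype V] [DecidableEq V]
    (edge : V → V → Bool) (bd : Finset V) : Prop :=
  (∀ v : V, ¬ Relation.TransGen (fun a b => edge a b = true) v v) ∧
  (∀ v ∈ bd, ∀ w, edge v w = false) ∧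
  (∀ v ∉ bd, (Finset.univ.filter (fun w => edge v w = true)).card = 2)

/-- The edge relation of the quotient graph `Γ/Θ`, obtained by collapsing the
vertex set `T` of the subgraph `Θ` to a single new boundary vertex `none`. -/
def qedge {V : Type} [Fintype V] [DecidableEq V] (edge : V → V → Bool) (T : Finset V) :
    Option {v : V // v ∉ T} → Option {v : V // v ∉ T} → Bool
  | some a, some b => edge a.1 b.1
  | some a, none => decide (∃ t ∈ T, edge a.1 t = true)
  | none, _ => false

/-- The boundary of the quotient graph `Γ/Θ`: the surviving boundary vertices of `Γ`
together with the new boundary vertex `none`. -/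
def qbd {V : Type} [Fintype V] [DecidableEq V] (bd T : Finset V) :
    Finset (Option {v : V // v ∉ T}) :=
  Finset.univ.filter (fun x => x = none ∨ ∃ a : {v : V // v ∉ T}, x = some a ∧ a.1 ∈ bd)

/-- `T` is (the vertex set of) a normal subgraph of `Γ` sitting on the boundary
vertices `B`: the induced subgraph on `T` is admissible with boundary `T ∩ bd = B`,
and the quotient `Γ/T` is admissible. -/
def NormalOn {V : Type} [Fintype V] [DecidableEq V]
    (edge : V → V → Bool) (bd : Finset V) (T B : Finset V) : Prop :=
  T ∩ bd = B ∧
  IsAdm (fun a b : {v : V // v ∈ T} => edge a.1 b.1)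
    (Finset.univ.filter (fun a : {v : V // v ∈ T} => a.1 ∈ bd)) ∧
  IsAdm (qedge edge T) (qbd bd T)

open Finset Relation

lemma wellFounded_flip_of_acyclic {α : Type*} [Finite α] {r : α → α → Prop}
    (h : ∀ a, ¬ TransGen r a a) : WellFounded (flip r) :=
  have : IsTrans α (flip (TransGen r)) := ⟨fun _ _ _ hab hbc => hbc.trans hab⟩
  have : Std.Irrefl (flip (TransGen r)) := ⟨h⟩
  Subrelation.wf (r := flip (TransGen r)) (fun h => TransGen.single h)
    (Finite.wellFounded_of_trans_of_irrefl _)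

lemma card_filter_subtype {α : Type*} [Fintype α] (p q : α → Prop) [DecidablePred p]
    [DecidablePred q] [Fintype (Subtype p)] : #{a : Subtype p | q a} = #{x | q x ∧ p x} := by
  rw [← filter_filter, ← card_subtype p]
  exact card_bij (fun a _ => a) (by simp) (by simp) (by simp)

def EdgeClosed {V : Type} (edge : V → V → Bool) (T : Finset V) : Prop :=
  ∀ v ∈ T, ∀ w, edge v w = true → w ∈ T

section Ancestors

variable {V : Type} [Fintype V] {edge : V → V → Bool} {T : Finset V} {b : V}

open Classical in
noncomputable def nonAncestors (edge : V → V → Bool) (b : V) : Finset V :=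
  {v | ¬ ReflTransGen (fun x y => edge x y = true) v b}

lemma mem_nonAncestors {v : V} :
    v ∈ nonAncestors edge b ↔ ¬ ReflTransGen (fun x y => edge x y = true) v b := by
  simp [nonAncestors]

lemma not_mem_nonAncestors_self : b ∉ nonAncestors edge b :=
  fun h => mem_nonAncestors.1 h .refl

lemma edgeClosed_nonAncestors : EdgeClosed edge (nonAncestors edge b) :=
  fun _ hv _ hvw => mem_nonAncestors.2 fun hwb => mem_nonAncestors.1 hv (hwb.head hvw)

lemma EdgeClosed.subset_nonAncestors (hT : EdgeClosed edge T) (hb : b ∉ T) :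
    T ⊆ nonAncestors edge b := by
  intro v hv
  refine mem_nonAncestors.2 fun hvb => ?_
  induction hvb using ReflTransGen.head_induction_on with
  | refl => exact hb hv
  | head hvw _ ih => exact ih (hT _ hv _ hvw)

end Ancestors

variable {V : Type} [Fintype V] [DecidableEq V] {edge : V → V → Bool} {bd T : Finset V} {b : V}

@[simp] lemma none_mem_qbd (bd T : Finset V) : none ∈ qbd bd T := by simp [qbd]

@[simp] lemma some_mem_qbd {a : {v // v ∉ T}} : some a ∈ qbd bd T ↔ a.1 ∈ bd := by
  simp only [qbd, mem_filter, mem_univ, reduceCtorEq, Option.some_inj, exists_eq_left', false_or,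
    true_and]

lemma not_transGen_qedge_none {y : Option {v // v ∉ T}} :
    ¬ TransGen (fun x y => qedge edge T x y = true) none y := by
  rw [TransGen.head'_iff]
  simp [qedge]

lemma transGen_of_transGen_qedge {a c : {v // v ∉ T}}
    (h : TransGen (fun x y => qedge edge T x y = true) (some a) (some c)) :
    TransGen (fun x y => edge x y = true) a c := by
  generalize hy : some c = y at h
  induction h generalizing c with
  | single h => subst hy; exact .single (by simpa [qedge] using h)
  | @tail m _ _ h ih =>
    subst hy
    cases m with
    | none => simp [qedge] at h
    | some m => exact (ih rfl).tail (by simpa [qedge] using h)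

lemma card_filter_qedge_some (a : {v // v ∉ T}) :
    #{y | qedge edge T (some a) y = true} =
      #{w | edge a w = true ∧ w ∉ T} + if ∃ t ∈ T, edge a t = true then 1 else 0 := by
  rw [card_filter, Fintype.sum_option, ← card_filter, add_comm]
  simp only [qedge, decide_eq_true_eq]
  congr 1
  exact card_filter_subtype (· ∉ T) (edge a · = true)

namespace IsAdm

lemma card_filter_qedge_eq_two_iff (hΓ : IsAdm edge bd) {a : {v // v ∉ T}} (ha : a.1 ∉ bd) :
    #{y | qedge edge T (some a) y = true} = 2 ↔ ∃ w ∉ T, edge a w = true := by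
  have hsplit : #{w | edge a w = true ∧ w ∉ T} + #{w | edge a w = true ∧ w ∈ T} = 2 := by
    rw [← hΓ.2.2 a ha, ← filter_filter, ← filter_filter, add_comm]
    exact card_filter_add_card_filter_not _
  have hout : (∃ w ∉ T, edge a w = true) ↔ 0 < #{w | edge a w = true ∧ w ∉ T} := by
    simp [card_pos, Finset.Nonempty, and_comm]
  have hin : (∃ t ∈ T, edge a t = true) ↔ 0 < #{w | edge a w = true ∧ w ∈ T} := by
    simp [card_pos, Finset.Nonempty, and_comm]
  rw [card_filter_qedge_some, hout]
  by_cases h : ∃ t ∈ T, edge a t = true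
  · rw [if_pos h]; have := hin.1 h; omega
  · rw [if_neg h]; have := hin.not.1 h; omega

lemma isAdm_qedge (hΓ : IsAdm edge bd) (hT : ∀ v ∉ T, v ∉ bd → ∃ w ∉ T, edge v w = true) :
    IsAdm (qedge edge T) (qbd bd T) := by
  refine ⟨?_, ?_, ?_⟩
  · rintro (_ | a) h
    · exact not_transGen_qedge_none h
    · exact hΓ.1 a (transGen_of_transGen_qedge h)
  · rintro (_ | a) ha (_ | w)
    · rfl
    · rfl
    · simpa [qedge] using fun t _ => hΓ.2.1 a (some_mem_qbd.1 ha) t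
    · exact hΓ.2.1 a (some_mem_qbd.1 ha) w
  · rintro (_ | a) ha
    · exact absurd (none_mem_qbd bd T) ha
    · have ha : a.1 ∉ bd := mt some_mem_qbd.2 ha
      exact (hΓ.card_filter_qedge_eq_two_iff ha).2 (hT a a.2 ha)

lemma isAdm_induced (hΓ : IsAdm edge bd) (hT : EdgeClosed edge T) :
    IsAdm (fun a b : {v // v ∈ T} => edge a.1 b.1) {a | a.1 ∈ bd} := by
  refine ⟨fun v h => hΓ.1 v (h.lift Subtype.val fun _ _ h => h), fun v hv w => ?_, fun v hv => ?_⟩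
  · exact hΓ.2.1 v (mem_filter.1 hv).2 w
  · rw [← hΓ.2.2 v (by simpa using hv)]
    refine (card_filter_subtype (· ∈ T) (edge v · = true)).trans (congrArg card (filter_congr ?_))
    exact fun w _ => and_iff_left_of_imp (hT v v.2 w)

lemma edgeClosed_of_isAdm_induced (hΓ : IsAdm edge bd)
    (hT : IsAdm (fun a b : {v // v ∈ T} => edge a.1 b.1) {a | a.1 ∈ bd}) : EdgeClosed edge T := by
  intro v hv w hw
  by_cases hvbd : v ∈ bd
  · simp [hΓ.2.1 v hvbd w] at hw
  have hcard : #{w | edge v w = true ∧ w ∈ T} = #{w | edge v w = true} := by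
    rw [hΓ.2.2 v hvbd, ← card_filter_subtype (· ∈ T) (edge v · = true)]
    exact hT.2.2 ⟨v, hv⟩ (by simpa using hvbd)
  rw [← filter_filter, card_filter_eq_iff] at hcard
  exact hcard w (by simpa using hw)

lemma nonAncestors_inter (hΓ : IsAdm edge bd) : nonAncestors edge b ∩ bd = bd.erase b := by
  ext v
  simp only [mem_inter, mem_erase, mem_nonAncestors]
  refine and_congr_left fun hv => not_congr ⟨fun hvb => ?_, fun h => h ▸ .refl⟩
  rcases hvb.cases_head with h | ⟨w, hvw, -⟩
  · exact h
  · simp [hΓ.2.1 v hv w] at hvw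

lemma normalOn_nonAncestors (hΓ : IsAdm edge bd) (hb : b ∈ bd) :
    NormalOn edge bd (nonAncestors edge b) (bd.erase b) := by
  refine ⟨hΓ.nonAncestors_inter, hΓ.isAdm_induced edgeClosed_nonAncestors, hΓ.isAdm_qedge ?_⟩
  intro v hv hvbd
  rw [mem_nonAncestors, not_not] at hv
  rcases hv.cases_head with rfl | ⟨w, hvw, hwb⟩
  · exact absurd hb hvbd
  · exact ⟨w, fun hw => mem_nonAncestors.1 hw hwb, hvw⟩

lemma nonAncestors_subset (hΓ : IsAdm edge bd) (hbd : bd.erase b ⊆ T)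
    (hq : IsAdm (qedge edge T) (qbd bd T)) : nonAncestors edge b ⊆ T := by
  intro v hv
  induction v using (wellFounded_flip_of_acyclic hΓ.1).induction with
  | _ v ih =>
  by_contra hvT
  by_cases hvbd : v ∈ bd
  · exact hvT (hbd (mem_erase.2 ⟨ne_of_mem_of_not_mem hv not_mem_nonAncestors_self, hvbd⟩))
  obtain ⟨w, hwT, hvw⟩ := (hΓ.card_filter_qedge_eq_two_iff (a := ⟨v, hvT⟩) hvbd).1
    (hq.2.2 _ (mt some_mem_qbd.1 hvbd))
  exact hwT (ih w hvw (edgeClosed_nonAncestors v hv w hvw))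

theorem existsUnique_normalOn_erase (hΓ : IsAdm edge bd) (hb : b ∈ bd) :
    ∃! T, NormalOn edge bd T (bd.erase b) := by
  refine ⟨nonAncestors edge b, hΓ.normalOn_nonAncestors hb, fun T ⟨hTbd, hind, hq⟩ => ?_⟩
  have hbT : b ∉ T := fun h => by simpa using hTbd.subset (mem_inter.2 ⟨h, hb⟩)
  exact ((hΓ.edgeClosed_of_isAdm_induced hind).subset_nonAncestors hbT).antisymm
    (hΓ.nonAncestors_subset (hTbd ▸ inter_subset_left) hq)

end IsAdm

/-- For every admissible graph `Γ` with three boundary vertices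
`b1, b2, b3`, there is a unique normal subgraph `α_L(Γ)` sitting on the first two
boundary vertices (with admissible two-boundary quotient), and symmetrically a unique
normal subgraph `α_R(Γ)` sitting on the last two boundary vertices. -/
theorem stmt_5 {V : Type} [Fintype V] [DecidableEq V]
    (edge : V → V → Bool) (b1 b2 b3 : V)
    (h12 : b1 ≠ b2) (h13 : b1 ≠ b3) (h23 : b2 ≠ b3)
    (hΓ : IsAdm edge {b1, b2, b3}) :
    (∃! T : Finset V, NormalOn edge {b1, b2, b3} T {b1, b2}) ∧
    (∃! T : Finset V, NormalOn edge {b1, b2, b3} T {b2, b3}) := by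
  have hL := hΓ.existsUnique_normalOn_erase (b := b3) (by simp)
  have hR := hΓ.existsUnique_normalOn_erase (b := b1) (by simp)
  have h3 : ({b1, b2, b3} : Finset V).erase b3 = {b1, b2} := by
    ext v; simp only [mem_erase, mem_insert, mem_singleton]; grind
  rw [h3] at hL
  rw [erase_insert (by simp [h12, h13])] at hR
  exact ⟨hL, hR⟩
end

section
/- Let Γ', Γ'' be admissible graphs with two boundary vertices and Γ an admissible graph with three boundary vertices. If Γ occurs as a summand in the left insertion Γ'' ∘₁ Γ' (inserting Γ' at the first boundary vertex of Γ'' by redistributing the incoming edges), then necessarily Γ' = α_L(Γ) and Γ'' = Γ/α_L(Γ). In particular boundary insertion has the unique factorization property: the pair (Γ'', Γ') is determined by Γ. -/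
/-- The edge relation of the graph obtained by inserting the graph `Γ'` (edges `e'`) at
the boundary vertex `c1` of the graph `Γ''` (edges `e''`), redirecting each edge of `Γ''`
entering `c1` according to the insertion datum `π`. -/
def edgeIns {V'' V' : Type} [DecidableEq V']
    (e'' : V'' → V'' → Bool) (e' : V' → V' → Bool) (c1 : V'')
    (π : {a : V'' // e'' a c1 = true} → V') :
    ({v : V'' // v ≠ c1} ⊕ V') → ({v : V'' // v ≠ c1} ⊕ V') → Bool
  | .inl a, .inl b => e'' a.1 b.1
  | .inl a, .inr w => if h : e'' a.1 c1 = true then decide (π ⟨a.1, h⟩ = w) else false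
  | .inr w, .inr x => e' w x
  | .inr _, .inl _ => false

/-!
Inside `Γ = Γ'' ∘₁ Γ'` the image `T` of `Γ'` is a normal subgraph: the graph induced on it is
`Γ'`, and collapsing it gives back `Γ''`, since the edges of `Γ''` into `c1` are exactly the
edges redirected into `Γ'`. For uniqueness, a normal subgraph `T` carrying the boundary
vertices `b1, b2` is closed under out-edges, while in the admissible quotient `Γ/T` every vertex
reaches the only other boundary vertex `b3`. Hence `T` is the set of vertices from which `b3`
is unreachable, which depends on `Γ` alone.
-/

open Relation

section AdmissibleGraph

variable {W : Type} [Fintype W] [DecidableEq W] {e : W → W → Bool} {bd : Finset W}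

lemma IsAdm.wellFounded (h : IsAdm e bd) :
    WellFounded (flip (TransGen fun x y => e x y = true)) :=
  have : IsTrans W (flip (TransGen fun x y => e x y = true)) := ⟨fun _ _ _ h₁ h₂ => h₂.trans h₁⟩
  have : Std.Irrefl (flip (TransGen fun x y => e x y = true)) := ⟨h.1⟩
  Finite.wellFounded_of_trans_of_irrefl _

/-- Every internal vertex has two distinct out-neighbours, so one of them is not `s`;
following such edges must end, by acyclicity, at `t`. -/
lemma IsAdm.reflTransGen_of_ne {s t : W} (h : IsAdm e {s, t}) {a : W} (hs : a ≠ s) :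
    ReflTransGen (fun x y => e x y = true) a t := by
  induction a using h.wellFounded.induction with
  | _ a ih =>
    by_cases ht : a = t
    · exact ht ▸ ReflTransGen.refl
    have hcard := h.2.2 a (by simp [hs, ht])
    obtain ⟨x, hx, hxs⟩ := Finset.exists_mem_ne (hcard ▸ one_lt_two) s
    have hax : e a x = true := (Finset.mem_filter.1 hx).2
    exact ReflTransGen.head hax (ih x (TransGen.single hax) hxs)

lemma IsAdm.map_equiv {W' : Type} [Fintype W'] [DecidableEq W'] {e' : W' → W' → Bool}
    (h : IsAdm e bd) (ψ : W ≃ W') (hψ : ∀ a b, e' (ψ a) (ψ b) = e a b) :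
    IsAdm e' (bd.map ψ.toEmbedding) := by
  have hψ' : ∀ a b, e' a b = e (ψ.symm a) (ψ.symm b) := fun a b => by
    rw [← hψ, ψ.apply_symm_apply, ψ.apply_symm_apply]
  refine ⟨fun v hv => h.1 (ψ.symm v) (hv.lift ψ.symm fun a b hab => ?_), fun v hv w => ?_,
    fun v hv => ?_⟩
  · rwa [Function.onFun, ← hψ']
  · rw [Finset.mem_map_equiv] at hv
    rw [hψ']
    exact h.2.1 _ hv _
  · rw [Finset.mem_map_equiv] at hv
    rw [← h.2.2 _ hv, ← Finset.card_map ψ.toEmbedding]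
    congr 1
    ext w
    simp [hψ']

end AdmissibleGraph

section NormalSubgraph

variable {V : Type} [Fintype V] [DecidableEq V] {edge : V → V → Bool} {bd T B : Finset V}

lemma reflTransGen_of_qedge {a b : {v : V // v ∉ T}}
    (h : ReflTransGen (fun x y => qedge edge T x y = true) (some a) (some b)) :
    ReflTransGen (fun x y => edge x y = true) a.1 b.1 := by
  generalize hb : some b = y at h
  induction h generalizing b with
  | refl => cases hb; exact ReflTransGen.refl
  | @tail m _ _ hm ih =>
    subst hb
    cases m with
    | none => simp [qedge] at hm
    | some c => exact (ih rfl).tail hm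

/-- An internal vertex of `T` has out-degree `2` both in `Γ` and in `T`. -/
lemma NormalOn.mem_of_edge (hΓ : IsAdm edge bd) (hT : NormalOn edge bd T B) {v w : V}
    (hv : v ∈ T) (hvw : edge v w = true) : w ∈ T := by
  by_cases hvbd : v ∈ bd
  · simp [hΓ.2.1 v hvbd w] at hvw
  have hsub := hT.2.1.2.2 ⟨v, hv⟩ (by simpa using hvbd)
  rw [← Finset.card_map (Function.Embedding.subtype _)] at hsub
  have hfull : (Finset.univ.filter fun w => edge v w = true).filter (· ∈ T) =
      Finset.univ.filter fun w => edge v w = true := by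
    refine Finset.eq_of_subset_of_card_le (Finset.filter_subset _ _) ?_
    rw [hΓ.2.2 v hvbd, ← hsub]
    refine Finset.card_le_card fun x hx => ?_
    simp only [Finset.mem_map, Finset.mem_filter, Finset.mem_univ, true_and] at hx
    obtain ⟨y, hy, rfl⟩ := hx
    exact Finset.mem_filter.2 ⟨Finset.mem_filter.2 ⟨Finset.mem_univ _, hy⟩, y.2⟩
  have hw : w ∈ (Finset.univ.filter fun w => edge v w = true) := by simpa using hvw
  rw [← hfull] at hw
  exact (Finset.mem_filter.1 hw).2

lemma NormalOn.mem_of_reflTransGen (hΓ : IsAdm edge bd) (hT : NormalOn edge bd T B)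
    {v w : V} (hv : v ∈ T) (h : ReflTransGen (fun x y => edge x y = true) v w) : w ∈ T := by
  induction h with
  | refl => exact hv
  | tail _ hab ih => exact hT.mem_of_edge hΓ ih hab

lemma qbd_eq_pair (hT : T ∩ bd = B) {b : V} (hb : bd \ B = {b}) :
    ∃ hbT : b ∉ T, qbd bd T = {none, some ⟨b, hbT⟩} := by
  have hmem : ∀ v, v ∈ bd ∧ v ∉ T ↔ v = b := fun v => by
    rw [← Finset.mem_singleton, ← hb, ← hT]
    simp +contextual
  refine ⟨fun h => ((hmem b).2 rfl).2 h, ?_⟩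
  ext (_ | ⟨v, hv⟩)
  · simp [qbd]
  · simp [qbd, ← hmem, hv]

/-- A normal subgraph carrying all boundary vertices but `b` consists of the vertices
from which `b` cannot be reached: outside it, the quotient is admissible with boundary
`{∗, b}`, so everything reaches `b`; inside it, nothing leaves it. -/
lemma NormalOn.not_mem_iff (hΓ : IsAdm edge bd) (hT : NormalOn edge bd T B) {b : V}
    (hb : bd \ B = {b}) {v : V} : v ∉ T ↔ ReflTransGen (fun x y => edge x y = true) v b := by
  obtain ⟨hbT, hqbd⟩ := qbd_eq_pair hT.1 hb
  refine ⟨fun hv => ?_, fun h hv => hbT (hT.mem_of_reflTransGen hΓ hv h)⟩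
  have hquot := hT.2.2
  rw [hqbd] at hquot
  exact reflTransGen_of_qedge (b := ⟨b, hbT⟩) (hquot.reflTransGen_of_ne (a := some ⟨v, hv⟩)
    (Option.some_ne_none _))

lemma NormalOn.unique (hΓ : IsAdm edge bd) {T' : Finset V} (hT : NormalOn edge bd T B)
    (hT' : NormalOn edge bd T' B) {b : V} (hb : bd \ B = {b}) : T = T' := by
  ext v
  rw [← not_iff_not, hT.not_mem_iff hΓ hb, hT'.not_mem_iff hΓ hb]

end NormalSubgraph

section SumEquiv

variable {α β γ : Type} [Fintype β] [DecidableEq γ] (φ : α ⊕ β ≃ γ)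

def inrImage : Finset γ := Finset.univ.image fun w => φ (.inr w)

@[simp]
lemma mem_inrImage {v : γ} : v ∈ inrImage φ ↔ ∃ w, φ (.inr w) = v := by
  simp [inrImage]

lemma inl_not_mem_inrImage (a : α) : φ (.inl a) ∉ inrImage φ := by
  simp

noncomputable def inrImageEquiv : β ≃ {v // v ∈ inrImage φ} :=
  (Equiv.ofInjective _ (φ.injective.comp Sum.inr_injective)).trans
    (Equiv.subtypeEquivRight fun v => by simp)

@[simp]
lemma inrImageEquiv_coe (w : β) : (inrImageEquiv φ w).1 = φ (.inr w) := rfl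

noncomputable def inlEquivCompl : α ≃ {v // v ∉ inrImage φ} :=
  (Equiv.ofInjective _ (φ.injective.comp Sum.inl_injective)).trans
    (Equiv.subtypeEquivRight fun v => by
      obtain ⟨s | s, rfl⟩ := φ.surjective v <;> simp)

@[simp]
lemma inlEquivCompl_coe (a : α) : (inlEquivCompl φ a).1 = φ (.inl a) := rfl

end SumEquiv

section Insertion

variable {V'' V' V : Type} [DecidableEq V''] [Fintype V'] [DecidableEq V]
  {e'' : V'' → V'' → Bool} {e' : V' → V' → Bool} {c1 : V''}
  {π : {a : V'' // e'' a c1 = true} → V'} {edge : V → V → Bool}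
  {φ : ({v : V'' // v ≠ c1} ⊕ V') ≃ V}

noncomputable def quotEquiv (φ : ({v : V'' // v ≠ c1} ⊕ V') ≃ V) :
    V'' ≃ Option {v : V // v ∉ inrImage φ} :=
  (Equiv.optionSubtypeNe c1).symm.trans (inlEquivCompl φ).optionCongr

lemma quotEquiv_self : quotEquiv φ c1 = none := by
  simp [quotEquiv]

lemma quotEquiv_of_ne {a : V''} (ha : a ≠ c1) :
    quotEquiv φ a = some (inlEquivCompl φ ⟨a, ha⟩) := by
  simp [quotEquiv, Equiv.optionSubtypeNe_symm_of_ne ha]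

/-- Edges of `Γ''` into `c1` are exactly those redirected into `Γ'`. -/
lemma qedge_quotEquiv [DecidableEq V'] [Fintype V]
    (hφe : ∀ u v, edge (φ u) (φ v) = edgeIns e'' e' c1 π u v) (hc1 : ∀ b, e'' c1 b = false)
    (a b : V'') :
    qedge edge (inrImage φ) (quotEquiv φ a) (quotEquiv φ b) = e'' a b := by
  by_cases ha : a = c1
  · subst ha
    rw [quotEquiv_self, hc1]
    rfl
  by_cases hb : b = c1
  · subst hb
    simp only [quotEquiv_of_ne ha, quotEquiv_self, qedge, inlEquivCompl_coe, mem_inrImage]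
    cases hac : e'' a b <;> simp [hφe, edgeIns, hac]
  · simp only [quotEquiv_of_ne ha, quotEquiv_of_ne hb, qedge, inlEquivCompl_coe, hφe]
    rfl

end Insertion

theorem stmt_6_general {V'' V' V : Type}
    [Fintype V''] [DecidableEq V''] [Fintype V'] [DecidableEq V']
    [Fintype V] [DecidableEq V]
    (e'' : V'' → V'' → Bool) (c1 c2 : V'') (hc : c1 ≠ c2)
    (h'' : IsAdm e'' {c1, c2})
    (e' : V' → V' → Bool) (d1 d2 : V')
    (h' : IsAdm e' {d1, d2})
    (edge : V → V → Bool) (b1 b2 b3 : V)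
    (h13 : b1 ≠ b3) (h23 : b2 ≠ b3)
    (hΓ : IsAdm edge {b1, b2, b3})
    (π : {a : V'' // e'' a c1 = true} → V')
    (φ : ({v : V'' // v ≠ c1} ⊕ V') ≃ V)
    (hφe : ∀ u v, edge (φ u) (φ v) = edgeIns e'' e' c1 π u v)
    (hφ1 : φ (.inr d1) = b1) (hφ2 : φ (.inr d2) = b2)
    (hφ3 : φ (.inl ⟨c2, Ne.symm hc⟩) = b3) :
    let T : Finset V := Finset.univ.image (fun w : V' => φ (.inr w))
    NormalOn edge {b1, b2, b3} T {b1, b2} ∧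
    (∀ T' : Finset V, NormalOn edge {b1, b2, b3} T' {b1, b2} → T' = T) ∧
    (∃ ψ : V'' ≃ Option {v : V // v ∉ T},
      (∀ a b : V'', qedge edge T (ψ a) (ψ b) = e'' a b) ∧
      ψ c1 = none ∧ ∃ h : b3 ∉ T, ψ c2 = some ⟨b3, h⟩) := by
  intro _
  change NormalOn _ _ (inrImage φ) _ ∧ (∀ T', _ → T' = inrImage φ) ∧
    ∃ ψ : V'' ≃ Option {v // v ∉ inrImage φ}, _
  have hb1T : b1 ∈ inrImage φ := hφ1 ▸ (mem_inrImage φ).2 ⟨d1, rfl⟩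
  have hb2T : b2 ∈ inrImage φ := hφ2 ▸ (mem_inrImage φ).2 ⟨d2, rfl⟩
  have hb3T : b3 ∉ inrImage φ := hφ3 ▸ inl_not_mem_inrImage φ _
  have hcap : inrImage φ ∩ {b1, b2, b3} = {b1, b2} := by
    ext v
    simp only [Finset.mem_inter, Finset.mem_insert, Finset.mem_singleton]
    grind
  have hdiff : ({b1, b2, b3} : Finset V) \ {b1, b2} = {b3} := by
    ext v
    simp only [Finset.mem_sdiff, Finset.mem_insert, Finset.mem_singleton]
    grind
  have hψe : ∀ a b, qedge edge (inrImage φ) (quotEquiv φ a) (quotEquiv φ b) = e'' a b :=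
    qedge_quotEquiv hφe (h''.2.1 c1 (by simp))
  have hψc2 : quotEquiv φ c2 = some ⟨b3, hb3T⟩ :=
    (quotEquiv_of_ne hc.symm).trans (congrArg some (Subtype.ext hφ3))
  have hT : NormalOn edge {b1, b2, b3} (inrImage φ) {b1, b2} := by
    refine ⟨hcap, ?_, ?_⟩
    · convert h'.map_equiv (e' := fun a b : {v // v ∈ inrImage φ} => edge a.1 b.1)
        (inrImageEquiv φ) fun w x => hφe _ _
      ext a
      obtain ⟨w, rfl⟩ := (inrImageEquiv φ).surjective a
      simp only [Finset.mem_filter, Finset.mem_univ, true_and, Finset.mem_map_equiv,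
        Equiv.symm_apply_apply, inrImageEquiv_coe]
      simp [← hφ1, ← hφ2, ← hφ3]
    · obtain ⟨_, hqbd⟩ := qbd_eq_pair hcap hdiff
      rw [hqbd]
      simpa [quotEquiv_self, hψc2] using h''.map_equiv (quotEquiv φ) hψe
  exact ⟨hT, fun T' hT' => hT'.unique hΓ hT hdiff, quotEquiv φ, hψe, quotEquiv_self, hb3T, hψc2⟩

/-- Unique factorization for boundary insertion.  If the admissible
three-boundary graph `Γ` (edges `edge`, boundary `b1,b2,b3`) occurs, via the isomorphism
`φ`, as a summand of the left insertion `Γ'' ∘₁ Γ'` of the two-boundary admissible graph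
`Γ'` (vertices `V'`, boundary `d1,d2`) at the first boundary vertex `c1` of the
two-boundary admissible graph `Γ''` (boundary `c1,c2`), with insertion datum `π`, then the
image `T` of the vertices of `Γ'` is the unique normal subgraph `α_L(Γ)` of `Γ` sitting on
`{b1,b2}` (so `Γ' = α_L(Γ)`), and `Γ''` is isomorphic to the quotient `Γ/α_L(Γ)`,
with `c1` corresponding to the collapsed boundary vertex. -/
theorem stmt_6 {V'' V' V : Type}
    [Fintype V''] [DecidableEq V''] [Fintype V'] [DecidableEq V']
    [Fintype V] [DecidableEq V]
    (e'' : V'' → V'' → Bool) (c1 c2 : V'') (hc : c1 ≠ c2)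
    (h'' : IsAdm e'' {c1, c2})
    (e' : V' → V' → Bool) (d1 d2 : V') (hd : d1 ≠ d2)
    (h' : IsAdm e' {d1, d2})
    (edge : V → V → Bool) (b1 b2 b3 : V)
    (h12 : b1 ≠ b2) (h13 : b1 ≠ b3) (h23 : b2 ≠ b3)
    (hΓ : IsAdm edge {b1, b2, b3})
    (π : {a : V'' // e'' a c1 = true} → V')
    (φ : ({v : V'' // v ≠ c1} ⊕ V') ≃ V)
    (hφe : ∀ u v, edge (φ u) (φ v) = edgeIns e'' e' c1 π u v)
    (hφ1 : φ (.inr d1) = b1) (hφ2 : φ (.inr d2) = b2)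
    (hφ3 : φ (.inl ⟨c2, Ne.symm hc⟩) = b3) :
    let T : Finset V := Finset.univ.image (fun w : V' => φ (.inr w))
    NormalOn edge {b1, b2, b3} T {b1, b2} ∧
    (∀ T' : Finset V, NormalOn edge {b1, b2, b3} T' {b1, b2} → T' = T) ∧
    (∃ ψ : V'' ≃ Option {v : V // v ∉ T},
      (∀ a b : V'', qedge edge T (ψ a) (ψ b) = e'' a b) ∧
      ψ c1 = none ∧ ∃ h : b3 ∉ T, ψ c2 = some ⟨b3, h⟩) :=
  stmt_6_general e'' c1 c2 hc h'' e' d1 d2 h' edge b1 b2 b3 h13 h23 hΓ π φ hφe hφ1 hφ2 hφ3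
end
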